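/- arXiv:2506.17698 — 2 statements merged into one kernel-verified Lean document; each statement's English description precedes it below -/
import Mathlib

section
/- Let C ⊆ E be a convex set of diameter at most D (i.e., ‖x - y‖ ≤ D for all x, y ∈ C) with D > 0, let T : E → E map C into C and be γ-Lipschitz on C with γ > 1, and let 0 < ε ≤ ‖T(x₀) - x₀‖ for some x₀ ∈ C, with additionally ε < 2γD. Set β = 1 - ε/(2γD), λ = 1 - β/γ, and let the sequence (x_k) be defined by x_{k+1} = λ·x₀ + (1-λ)·T(x_k). Then there exists k ≤ ⌈ln(2·‖T(x₀) - x₀‖/ε)/ln(1/β)⌉ such that ‖T(x_k) - x_k‖ ≤ (γ - 1)·D + ε. -/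
/-!
Consecutive Halpern iterates satisfy `x_{k+1} - x_k = (1 - λ) (T x_k - T x_{k-1})`, so their
distance contracts by the factor `(1 - λ) γ = β < 1` and after `k` steps is at most
`β ^ k ‖T x₀ - x₀‖`. On the other hand `T x_k - x_k = λ (T x_k - x₀) + (x_{k+1} - x_k)`, whose
first term is at most `λ D ≤ (γ - 1) D + ε / 2` by the diameter bound. The iteration count in
the statement is just large enough that `β ^ k ‖T x₀ - x₀‖ ≤ ε / 2`.
-/

open Real

lemma pow_ceil_log_div_log_inv_mul_le_one {β : ℝ} (hβ0 : 0 < β) (hβ1 : β < 1) (s : ℝ) :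
    β ^ ⌈log s / log (1 / β)⌉₊ * s ≤ 1 := by
  set K := ⌈log s / log (1 / β)⌉₊
  have hlog : 0 < log (1 / β) := log_pos (one_lt_one_div hβ0 hβ1)
  have hs : s ≤ (1 / β) ^ K :=
    pow_le_of_le_log (by positivity) ((div_le_iff₀ hlog).1 (Nat.le_ceil _))
  calc β ^ K * s ≤ β ^ K * (1 / β) ^ K := by gcongr
    _ = 1 := by rw [← mul_pow, mul_one_div_cancel hβ0.ne', one_pow]

lemma one_sub_div_mul_le_sub_one_mul_add {γ D ε : ℝ} (hγ : 1 ≤ γ) (hD : 0 < D) (hε : 0 ≤ ε) :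
    (1 - (1 - ε / (2 * γ * D)) / γ) * D ≤ (γ - 1) * D + ε / 2 := by
  have hγ0 : 0 < γ := by linarith
  have h : (1 - (1 - ε / (2 * γ * D)) / γ) * D = (1 - 1 / γ) * D + ε / (2 * γ ^ 2) := by
    field_simp; ring
  have hγ' : (γ - 1) - (1 - 1 / γ) = (γ - 1) ^ 2 / γ := by field_simp
  have hγD : (1 - 1 / γ) * D ≤ (γ - 1) * D :=
    mul_le_mul_of_nonneg_right (by linarith [show 0 ≤ (γ - 1) ^ 2 / γ by positivity]) hD.le
  have hεγ : ε / (2 * γ ^ 2) ≤ ε / 2 := by gcongr; nlinarith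
  linarith

section HalpernIteration

variable {E : Type*} [NormedAddCommGroup E] [NormedSpace ℝ E]
  {C : Set E} {T : E → E} {x₀ : E} {l γ : ℝ} {x : ℕ → E}

lemma halpern_mem (hC : Convex ℝ C) (hTC : ∀ y ∈ C, T y ∈ C) (hx₀C : x₀ ∈ C)
    (hl0 : 0 ≤ l) (hl1 : l ≤ 1) (hx0 : x 0 = x₀)
    (hx : ∀ k, x (k + 1) = l • x₀ + (1 - l) • T (x k)) (k : ℕ) : x k ∈ C := by
  induction k with
  | zero => rwa [hx0]
  | succ k ih => rw [hx k]; exact hC hx₀C (hTC _ ih) hl0 (by linarith) (by ring)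

lemma norm_halpern_succ_sub_le (hl1 : l ≤ 1) (hγ : 0 ≤ γ)
    (hT : ∀ y ∈ C, ∀ z ∈ C, ‖T y - T z‖ ≤ γ * ‖y - z‖) (hmem : ∀ k, x k ∈ C)
    (hx0 : x 0 = x₀) (hx : ∀ k, x (k + 1) = l • x₀ + (1 - l) • T (x k)) (k : ℕ) :
    ‖x (k + 1) - x k‖ ≤ ((1 - l) * γ) ^ k * ((1 - l) * ‖T x₀ - x₀‖) := by
  have hl1' : 0 ≤ 1 - l := by linarith
  induction k with
  | zero =>
    have h : x 1 - x 0 = (1 - l) • (T x₀ - x₀) := by rw [hx 0, hx0]; module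
    rw [h, norm_smul, norm_of_nonneg hl1', pow_zero, one_mul]
  | succ k ih =>
    have h : x (k + 2) - x (k + 1) = (1 - l) • (T (x (k + 1)) - T (x k)) := by
      rw [hx (k + 1), hx k]; module
    calc ‖x (k + 2) - x (k + 1)‖ = (1 - l) * ‖T (x (k + 1)) - T (x k)‖ := by
          rw [h, norm_smul, norm_of_nonneg hl1']
      _ ≤ (1 - l) * (γ * ‖x (k + 1) - x k‖) := by gcongr; exact hT _ (hmem _) _ (hmem _)
      _ = (1 - l) * γ * ‖x (k + 1) - x k‖ := by ring
      _ ≤ (1 - l) * γ * (((1 - l) * γ) ^ k * ((1 - l) * ‖T x₀ - x₀‖)) := by gcongr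
      _ = ((1 - l) * γ) ^ (k + 1) * ((1 - l) * ‖T x₀ - x₀‖) := by ring

lemma norm_halpern_residual_le (hl0 : 0 ≤ l)
    (hx : ∀ k, x (k + 1) = l • x₀ + (1 - l) • T (x k)) (k : ℕ) :
    ‖T (x k) - x k‖ ≤ l * ‖T (x k) - x₀‖ + ‖x (k + 1) - x k‖ := by
  have h : T (x k) - x k = l • (T (x k) - x₀) + (x (k + 1) - x k) := by rw [hx k]; module
  rw [h]
  refine (norm_add_le _ _).trans_eq ?_
  rw [norm_smul, norm_of_nonneg hl0]

end HalpernIteration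

theorem fixed_step_halpern_expansive_minimal_displacement_general
    {E : Type*} [NormedAddCommGroup E] [NormedSpace ℝ E]
    (C : Set E) (hC : Convex ℝ C)
    (D : ℝ) (hdiam : ∀ x ∈ C, ∀ y ∈ C, ‖x - y‖ ≤ D)
    (T : E → E) (hTC : ∀ x ∈ C, T x ∈ C)
    (γ : ℝ) (hγ : 1 < γ)
    (hT : ∀ x ∈ C, ∀ y ∈ C, ‖T x - T y‖ ≤ γ * ‖x - y‖)
    (x₀ : E) (hx₀C : x₀ ∈ C)
    (ε : ℝ) (hε0 : 0 < ε) (hε2 : ε < 2 * γ * D)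
    (β : ℝ) (hβ : β = 1 - ε / (2 * γ * D))
    (l : ℝ) (hl : l = 1 - β / γ)
    (x : ℕ → E) (hx0 : x 0 = x₀)
    (hx : ∀ k : ℕ, x (k + 1) = l • x₀ + (1 - l) • T (x k)) :
    ∃ k : ℕ,
      k ≤ ⌈Real.log (2 * ‖T x₀ - x₀‖ / ε) / Real.log (1 / β)⌉₊ ∧
      ‖T (x k) - x k‖ ≤ (γ - 1) * D + ε := by
  have hγ0 : 0 < γ := by linarith
  have hD0 : 0 < D := pos_of_mul_pos_right (hε0.trans hε2) (by positivity)
  have hεγD : ε / (2 * γ * D) < 1 := (div_lt_one (by positivity)).2 hε2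
  have hβ0 : 0 < β := by rw [hβ]; linarith
  have hβ1 : β < 1 := by rw [hβ]; linarith [show 0 < ε / (2 * γ * D) by positivity]
  have hβγ : β / γ ≤ 1 := (div_le_one hγ0).2 (by linarith)
  have hl0 : 0 ≤ l := by rw [hl]; linarith
  have hl1 : l ≤ 1 := by rw [hl]; linarith [div_pos hβ0 hγ0]
  have hlγ : (1 - l) * γ = β := by rw [hl]; field_simp; ring
  have hlD : l * D ≤ (γ - 1) * D + ε / 2 := by
    rw [hl, hβ]; exact one_sub_div_mul_le_sub_one_mul_add hγ.le hD0 hε0.le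
  have hmem := halpern_mem hC hTC hx₀C hl0 hl1 hx0 hx
  set K := ⌈Real.log (2 * ‖T x₀ - x₀‖ / ε) / Real.log (1 / β)⌉₊
  have hstep : ‖x (K + 1) - x K‖ ≤ ε / 2 := by
    have hK := pow_ceil_log_div_log_inv_mul_le_one hβ0 hβ1 (2 * ‖T x₀ - x₀‖ / ε)
    rw [mul_div_assoc', div_le_one hε0] at hK
    calc ‖x (K + 1) - x K‖ ≤ β ^ K * ((1 - l) * ‖T x₀ - x₀‖) := by
          simpa only [hlγ] using norm_halpern_succ_sub_le hl1 hγ0.le hT hmem hx0 hx K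
      _ ≤ β ^ K * ‖T x₀ - x₀‖ := by
          gcongr; exact mul_le_of_le_one_left (norm_nonneg _) (by linarith)
      _ ≤ ε / 2 := by linarith
  refine ⟨K, le_rfl, ?_⟩
  calc ‖T (x K) - x K‖ ≤ l * ‖T (x K) - x₀‖ + ‖x (K + 1) - x K‖ :=
        norm_halpern_residual_le hl0 hx K
    _ ≤ l * D + ε / 2 := by gcongr; exact hdiam _ (hTC _ (hmem K)) _ hx₀C
    _ ≤ (γ - 1) * D + ε := by linarith

/-- With the particular choice `β = 1 - ε/(2γD)` and `λ = 1 - β/γ`, the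
fixed-step Halpern iteration applied to a γ-Lipschitz operator (γ > 1) mapping
a convex set of diameter at most `D` to itself reaches a point with
fixed-point error at most `(γ - 1) D + ε` within
`⌈ln(2‖T x₀ - x₀‖/ε)/ln(1/β)⌉` iterations. -/
theorem fixed_step_halpern_expansive_minimal_displacement
    {E : Type*} [NormedAddCommGroup E] [NormedSpace ℝ E]
    (C : Set E) (hC : Convex ℝ C)
    (D : ℝ) (hD0 : 0 < D) (hdiam : ∀ x ∈ C, ∀ y ∈ C, ‖x - y‖ ≤ D)
    (T : E → E) (hTC : ∀ x ∈ C, T x ∈ C)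
    (γ : ℝ) (hγ : 1 < γ)
    (hT : ∀ x ∈ C, ∀ y ∈ C, ‖T x - T y‖ ≤ γ * ‖x - y‖)
    (x₀ : E) (hx₀C : x₀ ∈ C)
    (ε : ℝ) (hε0 : 0 < ε) (hε1 : ε ≤ ‖T x₀ - x₀‖) (hε2 : ε < 2 * γ * D)
    (β : ℝ) (hβ : β = 1 - ε / (2 * γ * D))
    (l : ℝ) (hl : l = 1 - β / γ)
    (x : ℕ → E) (hx0 : x 0 = x₀)
    (hx : ∀ k : ℕ, x (k + 1) = l • x₀ + (1 - l) • T (x k)) :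
    ∃ k : ℕ,
      k ≤ ⌈Real.log (2 * ‖T x₀ - x₀‖ / ε) / Real.log (1 / β)⌉₊ ∧
      ‖T (x k) - x k‖ ≤ (γ - 1) * D + ε :=
  fixed_step_halpern_expansive_minimal_displacement_general C hC D hdiam T hTC γ hγ hT x₀ hx₀C ε hε0
    hε2 β hβ l hl x hx0 hx
end

section
/- Let C ⊆ E be a convex set of diameter at most D > 0, and let T : E → E map C into C and be α-gradually expansive on C with α ∈ (0, √2 - 1). Let c > 0 and β ∈ (0,1) satisfy β² = (1+c)·α·(1 + α + β²), let ε̄ > 0, let y₀ ∈ C satisfy ‖T(y₀) - y₀‖ ≤ ε̄, set λ = (β²·ε̄/D)/(1 + β²·ε̄/D), and let the sequence (y_j) be defined by y_{j+1} = λ·y₀ + (1-λ)·T(y_j). Then for every j ≥ 1, ‖y_{j+1} - y_j‖ ≤ (1 - (λ/(1+c))·(c + λ))·‖y_j - y_{j-1}‖. -/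
/-!
Each Halpern step `y ↦ λ y₀ + (1 - λ) T y` shrinks increments by `1 - λ` and, by gradual
expansiveness, `T` stretches them by at most `1 + α ρ / D` wherever the fixed-point residuals are
at most `ρ`. Conversely, the residual at `y_{k+1}` is at most `(1 + α) ‖y_{k+1} - y_k‖ + λ D`, so
as long as the increments stay below `(1 - λ) ε̄` the residuals stay below
`ρ = (1 + α)(1 - λ) ε̄ + λ D`. The relation between `β`, `c` and `λ` is exactly what makes
`α ρ / D = λ / (1 + c)`, so the contraction factor `(1 - λ)(1 + α ρ / D)` equals
`1 - λ (c + λ) / (1 + c) ≤ 1`, and an induction keeps both bounds alive.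
-/

open Set

section

variable {E : Type*} [NormedAddCommGroup E]

def GraduallyExpansiveOn (α D : ℝ) (T : E → E) (C : Set E) : Prop :=
  ∀ x ∈ C, ∀ y ∈ C, ‖T x - T y‖ ≤ (1 + α * max ‖T x - x‖ ‖T y - y‖ / D) * ‖x - y‖

namespace GraduallyExpansiveOn

variable {α D : ℝ} {T : E → E} {C : Set E}

theorem norm_sub_le_of_residual_le (hT : GraduallyExpansiveOn α D T C) (hα : 0 ≤ α)
    (hD : 0 ≤ D) {x y : E} (hx : x ∈ C) (hy : y ∈ C) {r : ℝ} (hxr : ‖T x - x‖ ≤ r)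
    (hyr : ‖T y - y‖ ≤ r) : ‖T x - T y‖ ≤ (1 + α * r / D) * ‖x - y‖ :=
  (hT x hx y hy).trans (by gcongr; exact max_le hxr hyr)

theorem norm_sub_le_one_add_mul (hT : GraduallyExpansiveOn α D T C) (hα : 0 ≤ α)
    (hD : 0 ≤ D) (hTC : MapsTo T C C) (hdiam : ∀ x ∈ C, ∀ y ∈ C, ‖x - y‖ ≤ D)
    {x y : E} (hx : x ∈ C) (hy : y ∈ C) : ‖T x - T y‖ ≤ (1 + α) * ‖x - y‖ := by
  refine (hT.norm_sub_le_of_residual_le hα hD hx hy (hdiam _ (hTC hx) _ hx)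
    (hdiam _ (hTC hy) _ hy)).trans ?_
  gcongr
  rw [mul_div_assoc]
  exact mul_le_of_le_one_right hα (div_self_le_one D)

end GraduallyExpansiveOn

variable [NormedSpace ℝ E]

section Halpern

variable {T : E → E} {y : ℕ → E} {y₀ : E} {l : ℝ}

theorem halpern_succ_sub_succ (hy : ∀ j, y (j + 1) = l • y₀ + (1 - l) • T (y j)) (k : ℕ) :
    y (k + 2) - y (k + 1) = (1 - l) • (T (y (k + 1)) - T (y k)) := by
  rw [hy (k + 1), hy k]
  module

theorem halpern_one_sub_zero (hy : ∀ j, y (j + 1) = l • y₀ + (1 - l) • T (y j))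
    (hy0 : y 0 = y₀) : y 1 - y 0 = (1 - l) • (T y₀ - y₀) := by
  rw [hy 0, hy0]
  module

theorem halpern_apply_sub_succ (hy : ∀ j, y (j + 1) = l • y₀ + (1 - l) • T (y j)) (k : ℕ) :
    T (y k) - y (k + 1) = l • (T (y k) - y₀) := by
  rw [hy k]
  module

theorem halpern_mem_s12 {C : Set E} (hC : Convex ℝ C) (hTC : MapsTo T C C) (hy₀ : y₀ ∈ C)
    (hl0 : 0 ≤ l) (hl1 : l ≤ 1) (hy0 : y 0 = y₀)
    (hy : ∀ j, y (j + 1) = l • y₀ + (1 - l) • T (y j)) (k : ℕ) : y k ∈ C := by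
  induction k with
  | zero => exact hy0 ▸ hy₀
  | succ k ih => exact hy k ▸ hC hy₀ (hTC ih) hl0 (sub_nonneg.2 hl1) (add_sub_cancel l 1)

end Halpern

namespace GraduallyExpansiveOn

variable {α D : ℝ} {T : E → E} {C : Set E}
variable {y : ℕ → E} {y₀ : E} {l : ℝ}

theorem halpern_residual_le (hT : GraduallyExpansiveOn α D T C) (hα : 0 ≤ α) (hD : 0 ≤ D)
    (hTC : MapsTo T C C) (hdiam : ∀ x ∈ C, ∀ y ∈ C, ‖x - y‖ ≤ D) (hmem : ∀ k, y k ∈ C)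
    (hy₀ : y₀ ∈ C) (hl0 : 0 ≤ l) (hy : ∀ j, y (j + 1) = l • y₀ + (1 - l) • T (y j)) (k : ℕ) :
    ‖T (y (k + 1)) - y (k + 1)‖ ≤ (1 + α) * ‖y (k + 1) - y k‖ + l * D :=
  calc ‖T (y (k + 1)) - y (k + 1)‖
      = ‖(T (y (k + 1)) - T (y k)) + l • (T (y k) - y₀)‖ := by
        rw [← halpern_apply_sub_succ hy, sub_add_sub_cancel]
    _ ≤ ‖T (y (k + 1)) - T (y k)‖ + ‖l • (T (y k) - y₀)‖ := norm_add_le _ _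
    _ = ‖T (y (k + 1)) - T (y k)‖ + l * ‖T (y k) - y₀‖ := by
        rw [norm_smul, Real.norm_of_nonneg hl0]
    _ ≤ (1 + α) * ‖y (k + 1) - y k‖ + l * D := by
        gcongr
        · exact hT.norm_sub_le_one_add_mul hα hD hTC hdiam (hmem _) (hmem _)
        · exact hdiam _ (hTC (hmem k)) _ hy₀

theorem halpern_increment_le_of_residual_le (hT : GraduallyExpansiveOn α D T C) (hα : 0 ≤ α)
    (hD : 0 ≤ D) (hmem : ∀ k, y k ∈ C) (hl1 : l ≤ 1)
    (hy : ∀ j, y (j + 1) = l • y₀ + (1 - l) • T (y j)) {r : ℝ} {k : ℕ}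
    (hr₁ : ‖T (y (k + 1)) - y (k + 1)‖ ≤ r) (hr₀ : ‖T (y k) - y k‖ ≤ r) :
    ‖y (k + 2) - y (k + 1)‖ ≤ (1 - l) * (1 + α * r / D) * ‖y (k + 1) - y k‖ := by
  rw [halpern_succ_sub_succ hy, norm_smul, Real.norm_of_nonneg (sub_nonneg.2 hl1), mul_assoc]
  gcongr
  exact hT.norm_sub_le_of_residual_le hα hD (hmem _) (hmem _) hr₁ hr₀

theorem halpern_increment_le (hT : GraduallyExpansiveOn α D T C) (hα : 0 ≤ α) (hD : 0 ≤ D)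
    (hTC : MapsTo T C C) (hdiam : ∀ x ∈ C, ∀ y ∈ C, ‖x - y‖ ≤ D) (hmem : ∀ k, y k ∈ C)
    (hl0 : 0 ≤ l) (hl1 : l ≤ 1) (hy0 : y 0 = y₀)
    (hy : ∀ j, y (j + 1) = l • y₀ + (1 - l) • T (y j)) {ε : ℝ} (hε : ‖T y₀ - y₀‖ ≤ ε)
    (hκ : (1 - l) * (1 + α * ((1 + α) * ((1 - l) * ε) + l * D) / D) ≤ 1) (k : ℕ) :
    ‖y (k + 2) - y (k + 1)‖ ≤
      (1 - l) * (1 + α * ((1 + α) * ((1 - l) * ε) + l * D) / D) * ‖y (k + 1) - y k‖ := by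
  set ρ := (1 + α) * ((1 - l) * ε) + l * D
  have h1l : 0 ≤ 1 - l := sub_nonneg.2 hl1
  have hy₀C : y₀ ∈ C := hy0 ▸ hmem 0
  have bounds : ∀ n, ‖y (n + 1) - y n‖ ≤ (1 - l) * ε ∧ ‖T (y n) - y n‖ ≤ ρ := by
    intro n
    induction n with
    | zero =>
      rw [halpern_one_sub_zero hy hy0, norm_smul, Real.norm_of_nonneg h1l, hy0]
      refine ⟨by gcongr, ?_⟩
      have hε0 : 0 ≤ ε := (norm_nonneg _).trans hε
      calc ‖T y₀ - y₀‖ = (1 - l) * ‖T y₀ - y₀‖ + l * ‖T y₀ - y₀‖ := by ring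
        _ ≤ (1 - l) * ε + l * D := by gcongr; exact hdiam _ (hTC hy₀C) _ hy₀C
        _ ≤ ρ := by nlinarith [mul_nonneg hα (mul_nonneg h1l hε0)]
    | succ n ih =>
      have hres : ‖T (y (n + 1)) - y (n + 1)‖ ≤ ρ := by
        have := hT.halpern_residual_le hα hD hTC hdiam hmem hy₀C hl0 hy n
        linarith [mul_le_mul_of_nonneg_left ih.1 (by linarith : (0 : ℝ) ≤ 1 + α)]
      refine ⟨?_, hres⟩
      calc ‖y (n + 2) - y (n + 1)‖
          ≤ (1 - l) * (1 + α * ρ / D) * ‖y (n + 1) - y n‖ :=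
            hT.halpern_increment_le_of_residual_le hα hD hmem hl1 hy hres ih.2
        _ ≤ 1 * ((1 - l) * ε) := mul_le_mul hκ ih.1 (norm_nonneg _) zero_le_one
        _ = (1 - l) * ε := one_mul _
  exact hT.halpern_increment_le_of_residual_le hα hD hmem hl1 hy (bounds (k + 1)).2 (bounds k).2

end GraduallyExpansiveOn

end

theorem halpern_contraction_factor_eq {α β c ε D l : ℝ} (hD : 0 < D) (hε : 0 ≤ ε)
    (hc : 1 + c ≠ 0) (hβ : β ^ 2 = (1 + c) * α * (1 + α + β ^ 2))
    (hl : l = (β ^ 2 * ε / D) / (1 + β ^ 2 * ε / D)) :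
    (1 - l) * (1 + α * ((1 + α) * ((1 - l) * ε) + l * D) / D) = 1 - l / (1 + c) * (c + l) := by
  have hu : 0 < 1 + β ^ 2 * ε / D := by positivity
  subst hl
  field_simp
  linear_combination -(D ^ 2 * ε) * hβ

theorem gradually_expansive_halpern_increment_contraction_general
    {E : Type*} [NormedAddCommGroup E] [NormedSpace ℝ E]
    (C : Set E) (hC : Convex ℝ C)
    (D : ℝ) (hD0 : 0 < D) (hdiam : ∀ x ∈ C, ∀ y ∈ C, ‖x - y‖ ≤ D)
    (T : E → E) (hTC : ∀ x ∈ C, T x ∈ C)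
    (α : ℝ) (hα0 : 0 < α)
    (hT : ∀ x ∈ C, ∀ y ∈ C,
      ‖T x - T y‖ ≤ (1 + α * max ‖T x - x‖ ‖T y - y‖ / D) * ‖x - y‖)
    (c : ℝ) (hc : 0 < c) (β : ℝ)
    (hβ : β ^ 2 = (1 + c) * α * (1 + α + β ^ 2))
    (ε : ℝ)
    (y₀ : E) (hy₀C : y₀ ∈ C) (hy₀ : ‖T y₀ - y₀‖ ≤ ε)
    (l : ℝ) (hl : l = (β ^ 2 * ε / D) / (1 + β ^ 2 * ε / D))
    (y : ℕ → E) (hy0 : y 0 = y₀)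
    (hy : ∀ j : ℕ, y (j + 1) = l • y₀ + (1 - l) • T (y j)) :
    ∀ j : ℕ, 1 ≤ j →
      ‖y (j + 1) - y j‖ ≤ (1 - (l / (1 + c)) * (c + l)) * ‖y j - y (j - 1)‖ := by
  intro j hj
  obtain ⟨k, rfl⟩ := Nat.exists_eq_add_of_le' hj
  have hε : 0 ≤ ε := (norm_nonneg _).trans hy₀
  have hl0 : 0 ≤ l := hl ▸ by positivity
  have hl1 : l ≤ 1 := hl ▸ div_le_one_of_le₀ (by linarith) (by positivity)
  have hmem := halpern_mem_s12 hC hTC hy₀C hl0 hl1 hy0 hy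
  have hfactor := halpern_contraction_factor_eq hD0 hε (by positivity) hβ hl
  have hκ : 1 - l / (1 + c) * (c + l) ≤ 1 :=
    sub_le_self _ (mul_nonneg (div_nonneg hl0 (by positivity)) (by positivity))
  rw [← hfactor] at hκ ⊢
  have hGE : GraduallyExpansiveOn α D T C := hT
  exact hGE.halpern_increment_le hα0.le hD0.le hTC hdiam hmem hl0 hl1 hy0 hy hy₀ hκ k

/-- For an α-gradually expansive operator (α ∈ (0, √2 - 1)) on a convex set of
diameter at most `D`, with β² = (1+c)α(1 + α + β²) and step size
`λ = (β²ε̄/D)/(1 + β²ε̄/D)`, the fixed-step Halpern iteration started at a point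
with fixed-point error at most ε̄ contracts successive iterate distances:
`‖y_{j+1} - y_j‖ ≤ (1 - (λ/(1+c))(c + λ)) ‖y_j - y_{j-1}‖` for all j ≥ 1. -/
theorem gradually_expansive_halpern_increment_contraction
    {E : Type*} [NormedAddCommGroup E] [NormedSpace ℝ E]
    (C : Set E) (hC : Convex ℝ C)
    (D : ℝ) (hD0 : 0 < D) (hdiam : ∀ x ∈ C, ∀ y ∈ C, ‖x - y‖ ≤ D)
    (T : E → E) (hTC : ∀ x ∈ C, T x ∈ C)
    (α : ℝ) (hα0 : 0 < α) (hα1 : α < Real.sqrt 2 - 1)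
    (hT : ∀ x ∈ C, ∀ y ∈ C,
      ‖T x - T y‖ ≤ (1 + α * max ‖T x - x‖ ‖T y - y‖ / D) * ‖x - y‖)
    (c : ℝ) (hc : 0 < c) (β : ℝ) (hβ0 : 0 < β) (hβ1 : β < 1)
    (hβ : β ^ 2 = (1 + c) * α * (1 + α + β ^ 2))
    (ε : ℝ) (hε : 0 < ε)
    (y₀ : E) (hy₀C : y₀ ∈ C) (hy₀ : ‖T y₀ - y₀‖ ≤ ε)
    (l : ℝ) (hl : l = (β ^ 2 * ε / D) / (1 + β ^ 2 * ε / D))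
    (y : ℕ → E) (hy0 : y 0 = y₀)
    (hy : ∀ j : ℕ, y (j + 1) = l • y₀ + (1 - l) • T (y j)) :
    ∀ j : ℕ, 1 ≤ j →
      ‖y (j + 1) - y j‖ ≤ (1 - (l / (1 + c)) * (c + l)) * ‖y j - y (j - 1)‖ :=
  gradually_expansive_halpern_increment_contraction_general C hC D hD0 hdiam T hTC α hα0 hT c hc β
    hβ ε y₀ hy₀C hy₀ l hl y hy0 hy
end
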